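/- Complete invariants for the diagonal SO₃-action on tuples of quaternions over a real closed field: let k be a real closed field and v, w : Fin m → Quaternion k. Then the following are equivalent: (1) (v i).re = (w i).re for all i, and ((v i − star (v i)) * (v j − star (v j))).re = ((w i − star (w i)) * (w j − star (w j))).re for all i, j, and ((v i − star (v i)) * (v j − star (v j)) * (v l − star (v l))).re = ((w i − star (w i)) * (w j − star (w j)) * (w l − star (w l))).re for all i, j, l; (2) there exists a matrix R : Matrix (Fin 3) (Fin 3) k with Rᵀ * R = 1 and det R = 1 such that for all i, (w i).re = (v i).re and R.mulVec (imVec (v i)) = imVec (w i). -/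

import Mathlib

/-!
With `u i = imVec (v i)` and `x i = imVec (w i)`, the invariants are `-4` times the Gram matrix
`u i ⬝ᵥ u j` and `-8` times the triple products `u i ⨯₃ u j ⬝ᵥ u l`, and rotations preserve both.
Conversely, build right-handed orthonormal frames `(a, b, a ⨯₃ b)` for `u` and `(c, d, c ⨯₃ d)` for
`x` by the same recipe: normalise a nonzero `u p`, and either apply Gram–Schmidt to a `u q` with
`u p ⨯₃ u q ≠ 0` or, if all `u i` are collinear with `u p`, take any unit vector orthogonal to it.
The coordinates of each vector in its frame are then expressions in the invariants, hence agree, and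
the rotation carrying one frame to the other maps `u` to `x`.
-/

open Matrix

def imVec {k : Type*} [Field k] [LinearOrder k] [IsStrictOrderedRing k] (q : Quaternion k) : Fin 3 → k :=
  ![q.imI, q.imJ, q.imK]

section Rotation

variable {R : Type*} [CommRing R]

def IsRotation (A : Matrix (Fin 3) (Fin 3) R) : Prop := Aᵀ * A = 1 ∧ A.det = 1

theorem IsRotation.mul_transpose_self {A : Matrix (Fin 3) (Fin 3) R} (hA : IsRotation A) :
    A * Aᵀ = 1 :=
  mul_eq_one_comm.mp hA.1

theorem IsRotation.transpose_mul {A B : Matrix (Fin 3) (Fin 3) R} (hA : IsRotation A)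
    (hB : IsRotation B) : IsRotation (Aᵀ * B) := by
  refine ⟨?_, by rw [det_mul, det_transpose, hA.2, hB.2, one_mul]⟩
  rw [Matrix.transpose_mul, transpose_transpose, Matrix.mul_assoc, ← Matrix.mul_assoc A,
    hA.mul_transpose_self, Matrix.one_mul, hB.1]

theorem IsRotation.dotProduct_mulVec {A : Matrix (Fin 3) (Fin 3) R} (hA : IsRotation A)
    (a b : Fin 3 → R) : A *ᵥ a ⬝ᵥ A *ᵥ b = a ⬝ᵥ b := by
  rw [Matrix.dotProduct_mulVec, ← mulVec_transpose, mulVec_mulVec, hA.1, one_mulVec]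

theorem cross_mulVec_dotProduct_mulVec (A : Matrix (Fin 3) (Fin 3) R) (a b c : Fin 3 → R) :
    (A *ᵥ a) ⨯₃ (A *ᵥ b) ⬝ᵥ A *ᵥ c = A.det * (a ⨯₃ b ⬝ᵥ c) := by
  simp only [dotProduct, cross_apply, mulVec, Fin.sum_univ_three, cons_val_zero, cons_val_one,
    cons_val, det_fin_three]
  ring

theorem isRotation_of_orthonormal {a b : Fin 3 → R} (ha : a ⬝ᵥ a = 1) (hb : b ⬝ᵥ b = 1)
    (hab : a ⬝ᵥ b = 0) : IsRotation (of ![a, b, a ⨯₃ b]) := by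
  have hdet : (of ![a, b, a ⨯₃ b]).det = 1 := by
    change det ![a, b, a ⨯₃ b] = 1
    rw [← triple_product_eq_det, triple_product_permutation, triple_product_permutation,
      cross_dot_cross, ha, hb, hab, dotProduct_comm b, hab]
    ring
  refine ⟨mul_eq_one_comm.mp ?_, hdet⟩
  ext i j
  change ![a, b, a ⨯₃ b] i ⬝ᵥ ![a, b, a ⨯₃ b] j = (1 : Matrix (Fin 3) (Fin 3) R) i j
  fin_cases i <;> fin_cases j <;>
    simp [ha, hb, hab, cross_dot_cross, dotProduct_comm b a, dotProduct_comm (a ⨯₃ b)]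

theorem exists_rotation_of_orthonormal_coords {ι : Type*} {u x : ι → Fin 3 → R}
    {a b c d : Fin 3 → R} (ha : a ⬝ᵥ a = 1) (hb : b ⬝ᵥ b = 1) (hab : a ⬝ᵥ b = 0)
    (hc : c ⬝ᵥ c = 1) (hd : d ⬝ᵥ d = 1) (hcd : c ⬝ᵥ d = 0)
    (h : ∀ i, a ⬝ᵥ u i = c ⬝ᵥ x i ∧ b ⬝ᵥ u i = d ⬝ᵥ x i ∧ a ⨯₃ b ⬝ᵥ u i = c ⨯₃ d ⬝ᵥ x i) :
    ∃ A, IsRotation A ∧ ∀ i, A *ᵥ u i = x i := by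
  have hF := isRotation_of_orthonormal hc hd hcd
  refine ⟨_, hF.transpose_mul (isRotation_of_orthonormal ha hb hab), fun i => ?_⟩
  have hcoords : of ![a, b, a ⨯₃ b] *ᵥ u i = of ![c, d, c ⨯₃ d] *ᵥ x i := by
    obtain ⟨h0, h1, h2⟩ := h i
    ext j
    fin_cases j <;> simpa [mulVec]
  rw [← mulVec_mulVec, hcoords, mulVec_mulVec, hF.1, one_mulVec]

end Rotation

section OrderedRing

variable {R : Type*} [CommRing R] [LinearOrder R] [IsStrictOrderedRing R]

theorem dotProduct_self_pos {n : Type*} [Fintype n] {v : n → R} (hv : v ≠ 0) : 0 < v ⬝ᵥ v :=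
  (Finset.sum_nonneg fun i _ => mul_self_nonneg (v i)).lt_of_ne'
    (dotProduct_self_eq_zero.not.mpr hv)

theorem dotProduct_eq_zero_of_cross_eq_zero {p q z : Fin 3 → R} (hp : p ≠ 0)
    (hpq : p ⨯₃ q = 0) (hz : z ⬝ᵥ p = 0) : z ⬝ᵥ q = 0 := by
  have h := congrArg (z ⬝ᵥ ·) (cross_cross_eq_smul_sub_smul' p p q)
  simp only [hpq, map_zero, dotProduct_zero, dotProduct_sub, dotProduct_smul, hz, smul_eq_mul,
    mul_zero, zero_sub, zero_eq_neg, mul_eq_zero] at h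
  exact h.resolve_left (dotProduct_self_pos hp).ne'

variable {ι : Type*} {u x : ι → Fin 3 → R}

theorem eq_zero_of_gram_eq (hgram : ∀ i j, u i ⬝ᵥ u j = x i ⬝ᵥ x j) {i : ι} (hu : u i = 0) :
    x i = 0 := by
  rw [← dotProduct_self_eq_zero, ← hgram, hu, zero_dotProduct]

theorem cross_eq_zero_of_gram_eq (hgram : ∀ i j, u i ⬝ᵥ u j = x i ⬝ᵥ x j) {i j : ι}
    (hu : u i ⨯₃ u j = 0) : x i ⨯₃ x j = 0 := by
  rw [← dotProduct_self_eq_zero, cross_dot_cross, ← hgram, ← hgram, ← hgram, ← hgram,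
    ← cross_dot_cross, hu, zero_dotProduct]

end OrderedRing

section OrderedField

variable {k : Type*} [Field k] [LinearOrder k] [IsStrictOrderedRing k]

theorem exists_sq_mul_eq_one (hsq : ∀ x : k, 0 ≤ x → ∃ y : k, y ^ 2 = x) {y : k} (hy : 0 < y) :
    ∃ t : k, t ^ 2 * y = 1 := by
  obtain ⟨t, ht⟩ := hsq y⁻¹ (inv_nonneg.mpr hy.le)
  exact ⟨t, by rw [ht, inv_mul_cancel₀ hy.ne']⟩

theorem exists_unit_dotProduct_eq_zero (hsq : ∀ x : k, 0 ≤ x → ∃ y : k, y ^ 2 = x)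
    (a : Fin 3 → k) : ∃ b, b ⬝ᵥ b = 1 ∧ a ⬝ᵥ b = 0 := by
  by_cases h : 0 < a 0 ^ 2 + a 1 ^ 2
  · obtain ⟨t, ht⟩ := exists_sq_mul_eq_one hsq h
    refine ⟨![-(t * a 1), t * a 0, 0], ?_, ?_⟩
    · rw [vec3_dotProduct]
      dsimp only [cons_val]
      linear_combination ht
    · rw [vec3_dotProduct]
      dsimp only [cons_val]
      ring
  · have h0 : a 0 = 0 := by nlinarith [sq_nonneg (a 0), sq_nonneg (a 1)]
    exact ⟨![1, 0, 0], by simp, by rw [vec3_dotProduct]; simp [h0]⟩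

variable {ι : Type*} {u x : ι → Fin 3 → k}

theorem exists_rotation_of_collinear (hsq : ∀ x : k, 0 ≤ x → ∃ y : k, y ^ 2 = x)
    (hgram : ∀ i j, u i ⬝ᵥ u j = x i ⬝ᵥ x j) {p : ι} (hp : u p ≠ 0)
    (hcol : ∀ i, u p ⨯₃ u i = 0) :
    ∃ A, IsRotation A ∧ ∀ i, A *ᵥ u i = x i := by
  have hxp : x p ≠ 0 := fun h => hp (eq_zero_of_gram_eq (fun i j => (hgram i j).symm) h)
  have hxcol (i : ι) : x p ⨯₃ x i = 0 := cross_eq_zero_of_gram_eq hgram (hcol i)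
  obtain ⟨t, ht⟩ := exists_sq_mul_eq_one hsq (dotProduct_self_pos hp)
  obtain ⟨b, hb, hpb⟩ := exists_unit_dotProduct_eq_zero hsq (u p)
  obtain ⟨d, hd, hpd⟩ := exists_unit_dotProduct_eq_zero hsq (x p)
  -- a vector orthogonal to `u p` is orthogonal to every `u i`: the `b`- and `a ⨯₃ b`-coordinates vanish
  refine exists_rotation_of_orthonormal_coords (a := t • u p) (c := t • x p) ?_ hb ?_ ?_ hd ?_
    fun i => ⟨?_, ?_, ?_⟩
  · simp only [dotProduct_smul, smul_dotProduct, smul_eq_mul]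
    linear_combination ht
  · simp [smul_dotProduct, hpb]
  · simp only [dotProduct_smul, smul_dotProduct, ← hgram, smul_eq_mul]
    linear_combination ht
  · simp [smul_dotProduct, hpd]
  · simp [smul_dotProduct, hgram]
  · rw [dotProduct_eq_zero_of_cross_eq_zero hp (hcol i) (by rwa [dotProduct_comm]),
      dotProduct_eq_zero_of_cross_eq_zero hxp (hxcol i) (by rwa [dotProduct_comm])]
  · rw [dotProduct_eq_zero_of_cross_eq_zero hp (hcol i) (by simp [dotProduct_comm _ (u p)]),
      dotProduct_eq_zero_of_cross_eq_zero hxp (hxcol i) (by simp [dotProduct_comm _ (x p)])]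

theorem exists_rotation_of_cross_ne_zero (hsq : ∀ x : k, 0 ≤ x → ∃ y : k, y ^ 2 = x)
    (hgram : ∀ i j, u i ⬝ᵥ u j = x i ⬝ᵥ x j)
    (htriple : ∀ i j l, u i ⨯₃ u j ⬝ᵥ u l = x i ⨯₃ x j ⬝ᵥ x l) {p q : ι}
    (hpq : u p ⨯₃ u q ≠ 0) :
    ∃ A, IsRotation A ∧ ∀ i, A *ᵥ u i = x i := by
  have hp : u p ≠ 0 := by rintro h; simp [h] at hpq
  obtain ⟨t, ht⟩ := exists_sq_mul_eq_one hsq (dotProduct_self_pos hp)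
  obtain ⟨s, hs⟩ := exists_sq_mul_eq_one hsq
    (mul_pos (dotProduct_self_pos hp) (dotProduct_self_pos hpq))
  rw [cross_dot_cross] at hs
  -- Both frames are built from the Gram data by the same formulas, so rewriting with `hgram` and
  -- `htriple` turns each goal into a statement about `x` alone; `a ⨯₃ b` is a multiple of
  -- `u p ⨯₃ u q`, whence its coordinates are triple products.
  simp only [hgram, dotProduct_comm (x q) (x p)] at ht hs
  refine exists_rotation_of_orthonormal_coords (a := t • u p)
    (b := s • ((u p ⬝ᵥ u p) • u q - (u p ⬝ᵥ u q) • u p)) (c := t • x p)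
    (d := s • ((x p ⬝ᵥ x p) • x q - (x p ⬝ᵥ x q) • x p)) ?_ ?_ ?_ ?_ ?_ ?_ fun i => ⟨?_, ?_, ?_⟩
  all_goals simp only [smul_dotProduct, dotProduct_smul, sub_dotProduct, dotProduct_sub, map_smul,
    map_sub, LinearMap.smul_apply, cross_self, smul_zero, sub_zero, smul_eq_mul, hgram, htriple,
    dotProduct_comm (x q) (x p)]
  · linear_combination ht
  · linear_combination hs
  · ring
  · linear_combination ht
  · linear_combination hs
  · ring

theorem exists_rotation_of_gram_eq_of_triple_eq (hsq : ∀ x : k, 0 ≤ x → ∃ y : k, y ^ 2 = x)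
    (hgram : ∀ i j, u i ⬝ᵥ u j = x i ⬝ᵥ x j)
    (htriple : ∀ i j l, u i ⨯₃ u j ⬝ᵥ u l = x i ⨯₃ x j ⬝ᵥ x l) :
    ∃ A, IsRotation A ∧ ∀ i, A *ᵥ u i = x i := by
  by_cases hzero : ∀ i, u i = 0
  · refine ⟨1, ⟨by simp, det_one⟩, fun i => ?_⟩
    rw [one_mulVec, hzero i, eq_zero_of_gram_eq hgram (hzero i)]
  obtain ⟨p, hp⟩ := not_forall.mp hzero
  by_cases hcol : ∀ i, u p ⨯₃ u i = 0
  · exact exists_rotation_of_collinear hsq hgram hp hcol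
  obtain ⟨q, hpq⟩ := not_forall.mp hcol
  exact exists_rotation_of_cross_ne_zero hsq hgram htriple hpq

theorem re_sub_star_mul_sub_star (p q : Quaternion k) :
    ((p - star p) * (q - star q)).re = -4 * (imVec p ⬝ᵥ imVec q) := by
  simp only [Quaternion.re_mul, Quaternion.re_sub, Quaternion.re_star, Quaternion.imI_sub,
    Quaternion.imI_star, Quaternion.imJ_sub, Quaternion.imJ_star, Quaternion.imK_sub,
    Quaternion.imK_star, imVec, vec3_dotProduct, cons_val]
  ring

theorem re_sub_star_mul_sub_star_mul_sub_star (p q r : Quaternion k) :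
    ((p - star p) * (q - star q) * (r - star r)).re
      = -8 * (imVec p ⨯₃ imVec q ⬝ᵥ imVec r) := by
  simp only [Quaternion.re_mul, Quaternion.imI_mul, Quaternion.imJ_mul, Quaternion.imK_mul,
    Quaternion.re_sub, Quaternion.re_star, Quaternion.imI_sub, Quaternion.imI_star,
    Quaternion.imJ_sub, Quaternion.imJ_star, Quaternion.imK_sub, Quaternion.imK_star, imVec,
    cross_apply, vec3_dotProduct, cons_val]
  ring

end OrderedField

theorem quaternion_complete_invariants_rcf_general {k : Type*} [Field k] [LinearOrder k] [IsStrictOrderedRing k]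
    (hsq : ∀ x : k, 0 ≤ x → ∃ y : k, y ^ 2 = x)
    {m : ℕ} (v w : Fin m → Quaternion k) :
    ((∀ i, (v i).re = (w i).re) ∧
     (∀ i j, ((v i - star (v i)) * (v j - star (v j))).re =
        ((w i - star (w i)) * (w j - star (w j))).re) ∧
     (∀ i j l, ((v i - star (v i)) * (v j - star (v j)) * (v l - star (v l))).re =
        ((w i - star (w i)) * (w j - star (w j)) * (w l - star (w l))).re))
    ↔
    ∃ R : Matrix (Fin 3) (Fin 3) k, Rᵀ * R = 1 ∧ R.det = 1 ∧
      ∀ i, (w i).re = (v i).re ∧ R.mulVec (imVec (v i)) = imVec (w i) := by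
  simp only [re_sub_star_mul_sub_star, re_sub_star_mul_sub_star_mul_sub_star,
    mul_right_inj' (show (-4 : k) ≠ 0 by norm_num), mul_right_inj' (show (-8 : k) ≠ 0 by norm_num)]
  constructor
  · rintro ⟨hre, hgram, htriple⟩
    obtain ⟨R, ⟨hRR, hdet⟩, hR⟩ := exists_rotation_of_gram_eq_of_triple_eq hsq hgram htriple
    exact ⟨R, hRR, hdet, fun i => ⟨(hre i).symm, hR i⟩⟩
  · rintro ⟨R, hRR, hdet, hR⟩
    refine ⟨fun i => (hR i).1.symm, fun i j => ?_, fun i j l => ?_⟩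
    · rw [← (hR i).2, ← (hR j).2, IsRotation.dotProduct_mulVec ⟨hRR, hdet⟩]
    · rw [← (hR i).2, ← (hR j).2, ← (hR l).2, cross_mulVec_dotProduct_mulVec, hdet, one_mul]

/-- Complete invariants for the diagonal `SO₃`-action on tuples of quaternions
over a real closed field `k` (a linearly ordered field in which every
nonnegative element is a square and every odd-degree polynomial has a root). -/
theorem quaternion_complete_invariants_rcf {k : Type*} [Field k] [LinearOrder k] [IsStrictOrderedRing k]
    (hsq : ∀ x : k, 0 ≤ x → ∃ y : k, y ^ 2 = x)
    (hodd : ∀ p : Polynomial k, Odd p.natDegree → ∃ x : k, p.eval x = 0)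
    {m : ℕ} (v w : Fin m → Quaternion k) :
    ((∀ i, (v i).re = (w i).re) ∧
     (∀ i j, ((v i - star (v i)) * (v j - star (v j))).re =
        ((w i - star (w i)) * (w j - star (w j))).re) ∧
     (∀ i j l, ((v i - star (v i)) * (v j - star (v j)) * (v l - star (v l))).re =
        ((w i - star (w i)) * (w j - star (w j)) * (w l - star (w l))).re))
    ↔
    ∃ R : Matrix (Fin 3) (Fin 3) k, Rᵀ * R = 1 ∧ R.det = 1 ∧
      ∀ i, (w i).re = (v i).re ∧ R.mulVec (imVec (v i)) = imVec (w i) :=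
  quaternion_complete_invariants_rcf_general hsq v w
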